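/- Suppose the constants g^{kij} satisfy the standard null condition. Then there is a constant C > 0 depending only on g^{kij} such that for any twice continuously differentiable functions f, h of (t,x) ∈ (0,∞) × (ℝ² \ {0}), pointwise |g^{kij} ∂_k f ∂_{ij} h| ≤ C ⟨r + t⟩^{−1} ( |Γ f| |∂² h| + |∂ f| |Γ ∂ h| + |∂ f| |∂² h| |r − t| ), where r = |x|, |Γf| denotes the Euclidean norm of (Γ_a f)_{a=1..5}, and |Γ∂h| the Euclidean norm of (Γ_a ∂_b h)_{a=1..5, b=0,1,2}. -/

import Mathlib

open MeasureTheory Real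

noncomputable section

/-- Spacetime ℝ_t × ℝ²_x; coordinate 0 is time, coordinates 1, 2 are space. -/
abbrev Spt := Fin 3 → ℝ
/-- Space ℝ². -/
abbrev Sp := Fin 2 → ℝ

/-- Partial derivative ∂_i on spacetime (∂_0 = ∂_t). -/
def pd (i : Fin 3) (u : Spt → ℝ) : Spt → ℝ :=
  fun y => fderiv ℝ u y (Pi.single i 1)

/-- Spatial partial derivative ∂_i on ℝ² (index 0 ↔ x₁, index 1 ↔ x₂). -/
def spd (i : Fin 2) (f : Sp → ℝ) : Sp → ℝ :=
  fun x => fderiv ℝ f x (Pi.single i 1)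

/-- The wave operator □ = ∂_tt − Δ. -/
def Box (u : Spt → ℝ) : Spt → ℝ :=
  fun y => pd 0 (pd 0 u) y - pd 1 (pd 1 u) y - pd 2 (pd 2 u) y

/-- r = |x|, the spatial Euclidean norm of a spacetime point. -/
def rad (y : Spt) : ℝ := Real.sqrt ((y 1) ^ 2 + (y 2) ^ 2)

/-- The Euclidean norm on ℝ². -/
def nrm2 (x : Sp) : ℝ := Real.sqrt ((x 0) ^ 2 + (x 1) ^ 2)

/-- ω₀ = −1, ω_i = x_i / |x| for i = 1, 2. -/
def om (i : Fin 3) (y : Spt) : ℝ := if i = 0 then -1 else y i / rad y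

/-- The good derivatives T_i = ω_i ∂_t + ∂_i (note T_0 = 0). -/
def Td (i : Fin 3) (u : Spt → ℝ) : Spt → ℝ :=
  fun y => om i y * pd 0 u y + pd i u y

/-- The vector fields Γ = (∂_t, ∂_1, ∂_2, ∂_θ, L₀) (no Lorentz boosts). -/
def Gam : Fin 5 → (Spt → ℝ) → Spt → ℝ :=
  ![pd 0, pd 1, pd 2,
    fun u y => y 1 * pd 2 u y - y 2 * pd 1 u y,
    fun u y => y 0 * pd 0 u y + y 1 * pd 1 u y + y 2 * pd 2 u y]

/-- Γ^α = Γ₁^{α₁} ∘ Γ₂^{α₂} ∘ Γ₃^{α₃} ∘ Γ₄^{α₄} ∘ Γ₅^{α₅}. -/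
def GamPow (α : Fin 5 → ℕ) (u : Spt → ℝ) : Spt → ℝ :=
  (Gam 0)^[α 0] <| (Gam 1)^[α 1] <| (Gam 2)^[α 2] <| (Gam 3)^[α 3] <| (Gam 4)^[α 4] u

/-- The multi-indices α with |α| ≤ k. -/
def midx (k : ℕ) : Finset (Fin 5 → ℕ) :=
  (Fintype.piFinset fun _ => Finset.range (k + 1)).filter fun α => (∑ i, α i) ≤ k

/-- The Japanese bracket ⟨s⟩ = (1 + s²)^{1/2}. -/
def jb (s : ℝ) : ℝ := Real.sqrt (1 + s ^ 2)

/-- The spacetime point (t, x). -/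
def st (t : ℝ) (x : Sp) : Spt := ![t, x 0, x 1]

/-- The null vector (−1, cos θ, sin θ). -/
def nullVec (θ : ℝ) : Fin 3 → ℝ := ![(-1 : ℝ), Real.cos θ, Real.sin θ]

/-- The standard null condition: g^{kij} ω_k ω_i ω_j = 0 for all null ω. -/
def NullCond (g : Fin 3 → Fin 3 → Fin 3 → ℝ) : Prop :=
  ∀ θ : ℝ, ∑ k, ∑ i, ∑ j, g k i j * nullVec θ k * nullVec θ i * nullVec θ j = 0

/-- The quadratic nonlinearity g^{kij} ∂_k u ∂_{ij} u. -/
def Quad (g : Fin 3 → Fin 3 → Fin 3 → ℝ) (u : Spt → ℝ) : Spt → ℝ :=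
  fun y => ∑ k, ∑ i, ∑ j, g k i j * pd k u y * pd i (pd j u) y

/-- The energy E_J(u(t,·)) = Σ_{|α|≤J} ‖(∂Γ^α u)(t,·)‖²_{L²(ℝ²)}. -/
def energy (J : ℕ) (u : Spt → ℝ) (t : ℝ) : ℝ :=
  ∑ α ∈ midx J, ∑ i : Fin 3, ∫ x : Sp, (pd i (GamPow α u) (st t x)) ^ 2

/-- The L² norm on ℝ². -/
def L2 (f : Sp → ℝ) : ℝ := Real.sqrt (∫ x : Sp, (f x) ^ 2)

/-- The domain (0,∞) × (ℝ² \ {0}) in spacetime. -/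
def Udom : Set Spt := {y | 0 < y 0 ∧ rad y ≠ 0}


/-! ### Auxiliary lemmas -/

lemma comp_le_sqrt {n : ℕ} (v : Fin n → ℝ) (a : Fin n) : |v a| ≤ Real.sqrt (∑ b, v b ^ 2) := by
  rw [← Real.sqrt_sq_eq_abs]
  exact Real.sqrt_le_sqrt
    (Finset.single_le_sum (f := fun b => v b ^ 2) (fun i _ => sq_nonneg _) (Finset.mem_univ a))

lemma comp2_le_sqrt {n m : ℕ} (v : Fin n → Fin m → ℝ) (a : Fin n) (b : Fin m) :
    |v a b| ≤ Real.sqrt (∑ c, ∑ d, v c d ^ 2) := by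
  refine (comp_le_sqrt (v a) b).trans (Real.sqrt_le_sqrt ?_)
  exact Finset.single_le_sum (f := fun c => ∑ d, v c d ^ 2)
    (fun c _ => Finset.sum_nonneg fun d _ => sq_nonneg _) (Finset.mem_univ a)

lemma jb_pos (s : ℝ) : 0 < jb s := Real.sqrt_pos.2 (by positivity)

lemma jb_le (s : ℝ) (hs : 0 ≤ s) : jb s ≤ 1 + s := by
  rw [jb, show (1:ℝ) + s = Real.sqrt ((1 + s) ^ 2) from (Real.sqrt_sq (by linarith)).symm]
  exact Real.sqrt_le_sqrt (by nlinarith)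

lemma udom_open : IsOpen Udom := by
  have h2 : Continuous rad :=
    Real.continuous_sqrt.comp (((continuous_apply 1).pow 2).add ((continuous_apply 2).pow 2))
  exact (isOpen_lt continuous_const (continuous_apply 0)).inter (isOpen_ne_fun h2 continuous_const)

lemma rad_pos {y : Spt} (hy : y ∈ Udom) : 0 < rad y :=
  lt_of_le_of_ne (Real.sqrt_nonneg _) (Ne.symm hy.2)

lemma abs_y1_le (y : Spt) : |y 1| ≤ rad y := by
  rw [rad, ← Real.sqrt_sq_eq_abs]; exact Real.sqrt_le_sqrt (by nlinarith [sq_nonneg (y 2)])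

lemma abs_y2_le (y : Spt) : |y 2| ≤ rad y := by
  rw [rad, ← Real.sqrt_sq_eq_abs]; exact Real.sqrt_le_sqrt (by nlinarith [sq_nonneg (y 1)])

lemma om_le {y : Spt} (hy : y ∈ Udom) (k : Fin 3) : |om k y| ≤ 1 := by
  have hr := rad_pos hy
  fin_cases k
  · show |(-1 : ℝ)| ≤ 1; norm_num
  · show |y 1 / rad y| ≤ 1
    rw [abs_div, abs_of_pos hr]; exact (div_le_one hr).2 (abs_y1_le y)
  · show |y 2 / rad y| ≤ 1
    rw [abs_div, abs_of_pos hr]; exact (div_le_one hr).2 (abs_y2_le y)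

lemma pd_swap (h : Spt → ℝ) (hh : ContDiffOn ℝ 2 h Udom) (y : Spt) (hy : y ∈ Udom)
    (i j : Fin 3) : pd i (pd j h) y = pd j (pd i h) y := by
  have hc : ContDiffAt ℝ 2 h y := hh.contDiffAt (udom_open.mem_nhds hy)
  have hsymm : IsSymmSndFDerivAt ℝ h y := hc.isSymmSndFDerivAt (by simp [minSmoothness_of_isRCLikeNormedField])
  have hfd : DifferentiableAt ℝ (fderiv ℝ h) y := by
    have : ContDiffAt ℝ 1 (fderiv ℝ h) y := hc.fderiv_right (by norm_num)
    exact this.differentiableAt one_ne_zero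
  have key : ∀ v w : Spt, fderiv ℝ (fun z => fderiv ℝ h z w) y v
      = fderiv ℝ (fderiv ℝ h) y v w := by
    intro v w
    have h2 := fderiv_clm_apply (c := fderiv ℝ h) (u := fun _ => w) hfd (differentiableAt_const w)
    have h3 : fderiv ℝ (fun z => fderiv ℝ h z w) y = (fderiv ℝ (fderiv ℝ h) y).flip w := by
      simpa using h2
    rw [h3]; rfl
  show fderiv ℝ (fun z => fderiv ℝ h z (Pi.single j 1)) y (Pi.single i 1)
      = fderiv ℝ (fun z => fderiv ℝ h z (Pi.single i 1)) y (Pi.single j 1)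
  rw [key, key]
  exact hsymm _ _

set_option maxHeartbeats 1600000 in
lemma td_bound (u : Spt → ℝ) (y : Spt) (hy : y ∈ Udom) (i : Fin 3) :
    |Td i u y| ≤ (jb (rad y + y 0))⁻¹ *
      (6 * Real.sqrt (∑ a : Fin 5, (Gam a u y) ^ 2)
       + 4 * |rad y - y 0| * Real.sqrt (∑ a : Fin 3, (pd a u y) ^ 2)) := by
  obtain ⟨ht0, hr0⟩ := hy
  have hr : 0 < rad y := lt_of_le_of_ne (Real.sqrt_nonneg _) (Ne.symm hr0)
  set A := Real.sqrt (∑ a : Fin 5, (Gam a u y) ^ 2) with hAdef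
  set B := Real.sqrt (∑ a : Fin 3, (pd a u y) ^ 2) with hBdef
  set D := |rad y - y 0| with hDdef
  have hA : 0 ≤ A := Real.sqrt_nonneg _
  have hB : 0 ≤ B := Real.sqrt_nonneg _
  have hD : 0 ≤ D := abs_nonneg _
  have hBA : B ≤ A := by
    apply Real.sqrt_le_sqrt
    rw [Fin.sum_univ_three, Fin.sum_univ_five]
    have e0 : Gam 0 u y = pd 0 u y := rfl
    have e1 : Gam 1 u y = pd 1 u y := rfl
    have e2 : Gam 2 u y = pd 2 u y := rfl
    rw [e0, e1, e2]
    nlinarith [sq_nonneg (Gam 3 u y), sq_nonneg (Gam 4 u y)]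
  have hB0 : |pd 0 u y| ≤ B := comp_le_sqrt (fun a : Fin 3 => pd a u y) 0
  have hB1 : |pd 1 u y| ≤ B := comp_le_sqrt (fun a : Fin 3 => pd a u y) 1
  have hB2 : |pd 2 u y| ≤ B := comp_le_sqrt (fun a : Fin 3 => pd a u y) 2
  have hA3 : |Gam 3 u y| ≤ A := comp_le_sqrt (fun a : Fin 5 => Gam a u y) 3
  have hA4 : |Gam 4 u y| ≤ A := comp_le_sqrt (fun a : Fin 5 => Gam a u y) 4
  have hy1 : |y 1| ≤ rad y := abs_y1_le y
  have hy2 : |y 2| ≤ rad y := abs_y2_le y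
  have hsq : rad y ^ 2 = y 1 ^ 2 + y 2 ^ 2 := Real.sq_sqrt (by positivity)
  have hjble : jb (rad y + y 0) ≤ 1 + (rad y + y 0) := jb_le _ (by linarith)
  have hjbpos : 0 < jb (rad y + y 0) := jb_pos _
  have htr : y 0 ≤ rad y + D := by
    have : y 0 - rad y ≤ |rad y - y 0| := by rw [abs_sub_comm]; exact le_abs_self _
    linarith
  rw [inv_mul_eq_div, le_div_iff₀ hjbpos]
  have main : (1 + (rad y + y 0)) * |Td i u y| ≤ 6 * A + 4 * D * B := by
    fin_cases i
    · -- i = 0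
      show (1 + (rad y + y 0)) * |Td 0 u y| ≤ 6 * A + 4 * D * B
      have : Td 0 u y = 0 := by
        show om 0 y * pd 0 u y + pd 0 u y = 0
        show (-1 : ℝ) * pd 0 u y + pd 0 u y = 0
        ring
      rw [this]
      simp only [abs_zero, mul_zero]
      nlinarith
    · -- i = 1
      show (1 + (rad y + y 0)) * |Td 1 u y| ≤ 6 * A + 4 * D * B
      have habs : |Td 1 u y| ≤ 2 * B := by
        have : Td 1 u y = (y 1 / rad y) * pd 0 u y + pd 1 u y := rfl
        rw [this]
        have h1 : |y 1 / rad y| ≤ 1 := by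
          rw [abs_div, abs_of_pos hr]; exact (div_le_one hr).2 hy1
        calc |(y 1 / rad y) * pd 0 u y + pd 1 u y| ≤ |(y 1 / rad y) * pd 0 u y| + |pd 1 u y| :=
              abs_add_le _ _
          _ ≤ 1 * B + B := by
              rw [abs_mul]
              exact add_le_add (mul_le_mul h1 hB0 (abs_nonneg _) zero_le_one) hB1
          _ = 2 * B := by ring
      have hid : rad y * (rad y * Td 1 u y)
          = y 1 * Gam 4 u y + y 1 * (rad y - y 0) * pd 0 u y - y 2 * Gam 3 u y := by
        have e3 : Gam 3 u y = y 1 * pd 2 u y - y 2 * pd 1 u y := rfl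
        have e4 : Gam 4 u y = y 0 * pd 0 u y + y 1 * pd 1 u y + y 2 * pd 2 u y := rfl
        have eT : Td 1 u y = (y 1 / rad y) * pd 0 u y + pd 1 u y := rfl
        rw [e3, e4, eT]
        field_simp
        linear_combination (pd 1 u y) * hsq
      have hrT : rad y * |Td 1 u y| ≤ 2 * A + D * B := by
        apply le_of_mul_le_mul_left _ hr
        have h1 : rad y * (rad y * |Td 1 u y|) = |rad y * (rad y * Td 1 u y)| := by
          rw [abs_mul, abs_mul, abs_of_pos hr]
        rw [h1, hid]
        calc |y 1 * Gam 4 u y + y 1 * (rad y - y 0) * pd 0 u y - y 2 * Gam 3 u y|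
            ≤ |y 1 * Gam 4 u y| + |y 1 * (rad y - y 0) * pd 0 u y| + |y 2 * Gam 3 u y| :=
              (abs_sub _ _).trans (add_le_add_left (abs_add_le _ _) _)
          _ = |y 1| * |Gam 4 u y| + |y 1| * D * |pd 0 u y| + |y 2| * |Gam 3 u y| := by
              rw [abs_mul, abs_mul, abs_mul, abs_mul]
          _ ≤ rad y * (2 * A + D * B) := by
              have k1 : |y 1| * |Gam 4 u y| ≤ rad y * A :=
                mul_le_mul hy1 hA4 (abs_nonneg _) hr.le
              have k2 : |y 2| * |Gam 3 u y| ≤ rad y * A :=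
                mul_le_mul hy2 hA3 (abs_nonneg _) hr.le
              have k3 : D * (|y 1| * |pd 0 u y|) ≤ D * (rad y * B) :=
                mul_le_mul_of_nonneg_left (mul_le_mul hy1 hB0 (abs_nonneg _) hr.le) hD
              nlinarith
      have htT : y 0 * |Td 1 u y| ≤ 2 * A + 3 * (D * B) := by
        have h2 : y 0 * |Td 1 u y| ≤ (rad y + D) * |Td 1 u y| :=
          mul_le_mul_of_nonneg_right htr (abs_nonneg _)
        have h3 : D * |Td 1 u y| ≤ D * (2 * B) := mul_le_mul_of_nonneg_left habs hD
        nlinarith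
      have hexp : (1 + (rad y + y 0)) * |Td 1 u y|
          = |Td 1 u y| + rad y * |Td 1 u y| + y 0 * |Td 1 u y| := by ring
      rw [hexp]
      linarith
    · -- i = 2
      show (1 + (rad y + y 0)) * |Td 2 u y| ≤ 6 * A + 4 * D * B
      have habs : |Td 2 u y| ≤ 2 * B := by
        have : Td 2 u y = (y 2 / rad y) * pd 0 u y + pd 2 u y := rfl
        rw [this]
        have h1 : |y 2 / rad y| ≤ 1 := by
          rw [abs_div, abs_of_pos hr]; exact (div_le_one hr).2 hy2
        calc |(y 2 / rad y) * pd 0 u y + pd 2 u y| ≤ |(y 2 / rad y) * pd 0 u y| + |pd 2 u y| :=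
              abs_add_le _ _
          _ ≤ 1 * B + B := by
              rw [abs_mul]
              exact add_le_add (mul_le_mul h1 hB0 (abs_nonneg _) zero_le_one) hB2
          _ = 2 * B := by ring
      have hid : rad y * (rad y * Td 2 u y)
          = y 2 * Gam 4 u y + y 2 * (rad y - y 0) * pd 0 u y + y 1 * Gam 3 u y := by
        have e3 : Gam 3 u y = y 1 * pd 2 u y - y 2 * pd 1 u y := rfl
        have e4 : Gam 4 u y = y 0 * pd 0 u y + y 1 * pd 1 u y + y 2 * pd 2 u y := rfl
        have eT : Td 2 u y = (y 2 / rad y) * pd 0 u y + pd 2 u y := rfl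
        rw [e3, e4, eT]
        field_simp
        linear_combination (pd 2 u y) * hsq
      have hrT : rad y * |Td 2 u y| ≤ 2 * A + D * B := by
        apply le_of_mul_le_mul_left _ hr
        have h1 : rad y * (rad y * |Td 2 u y|) = |rad y * (rad y * Td 2 u y)| := by
          rw [abs_mul, abs_mul, abs_of_pos hr]
        rw [h1, hid]
        calc |y 2 * Gam 4 u y + y 2 * (rad y - y 0) * pd 0 u y + y 1 * Gam 3 u y|
            ≤ |y 2 * Gam 4 u y| + |y 2 * (rad y - y 0) * pd 0 u y| + |y 1 * Gam 3 u y| :=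
              (abs_add_le _ _).trans (add_le_add_left (abs_add_le _ _) _)
          _ = |y 2| * |Gam 4 u y| + |y 2| * D * |pd 0 u y| + |y 1| * |Gam 3 u y| := by
              rw [abs_mul, abs_mul, abs_mul, abs_mul]
          _ ≤ rad y * (2 * A + D * B) := by
              have k1 : |y 2| * |Gam 4 u y| ≤ rad y * A :=
                mul_le_mul hy2 hA4 (abs_nonneg _) hr.le
              have k2 : |y 1| * |Gam 3 u y| ≤ rad y * A :=
                mul_le_mul hy1 hA3 (abs_nonneg _) hr.le
              have k3 : D * (|y 2| * |pd 0 u y|) ≤ D * (rad y * B) :=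
                mul_le_mul_of_nonneg_left (mul_le_mul hy2 hB0 (abs_nonneg _) hr.le) hD
              nlinarith
      have htT : y 0 * |Td 2 u y| ≤ 2 * A + 3 * (D * B) := by
        have h2 : y 0 * |Td 2 u y| ≤ (rad y + D) * |Td 2 u y| :=
          mul_le_mul_of_nonneg_right htr (abs_nonneg _)
        have h3 : D * |Td 2 u y| ≤ D * (2 * B) := mul_le_mul_of_nonneg_left habs hD
        nlinarith
      have hexp : (1 + (rad y + y 0)) * |Td 2 u y|
          = |Td 2 u y| + rad y * |Td 2 u y| + y 0 * |Td 2 u y| := by ring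
      rw [hexp]
      linarith
  calc |Td i u y| * jb (rad y + y 0) ≤ |Td i u y| * (1 + (rad y + y 0)) :=
        mul_le_mul_of_nonneg_left hjble (abs_nonneg _)
    _ = (1 + (rad y + y 0)) * |Td i u y| := by ring
    _ ≤ 6 * A + 4 * D * B := main

lemma bnd_mono {J a b a' b' D' : ℝ} (hJ : 0 ≤ J) (hD : 0 ≤ D') (ha : a ≤ a') (hb : b ≤ b')
    (hb0 : 0 ≤ b) : J * (6 * a + 4 * D' * b) ≤ J * (6 * a' + 4 * D' * b') := by
  apply mul_le_mul_of_nonneg_left _ hJ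
  nlinarith [mul_le_mul_of_nonneg_left hb hD]

set_option maxHeartbeats 3000000 in
/-- Null form bound with the Γ vector fields:
|g^{kij} ∂_k f ∂_{ij} h| ≲ ⟨r+t⟩⁻¹ (|Γf| |∂²h| + |∂f| |Γ∂h| + |∂f| |∂²h| |r−t|). -/
theorem statement6
    (g : Fin 3 → Fin 3 → Fin 3 → ℝ)
    (hsym : ∀ k i j, g k i j = g k j i)
    (hnull : NullCond g) :
    ∃ C > (0 : ℝ), ∀ f h : Spt → ℝ,
      ContDiffOn ℝ 2 f Udom → ContDiffOn ℝ 2 h Udom →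
      ∀ y ∈ Udom,
        |∑ k, ∑ i, ∑ j, g k i j * pd k f y * pd i (pd j h) y| ≤
          C * (jb (rad y + y 0))⁻¹ *
            (Real.sqrt (∑ a : Fin 5, (Gam a f y) ^ 2) *
               Real.sqrt (∑ a : Fin 3, ∑ b : Fin 3, (pd a (pd b h) y) ^ 2)
             + Real.sqrt (∑ a : Fin 3, (pd a f y) ^ 2) *
               Real.sqrt (∑ a : Fin 5, ∑ b : Fin 3, (Gam a (pd b h) y) ^ 2)
             + Real.sqrt (∑ a : Fin 3, (pd a f y) ^ 2) *
               Real.sqrt (∑ a : Fin 3, ∑ b : Fin 3, (pd a (pd b h) y) ^ 2) *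
               |rad y - y 0|) := by
  refine ⟨12 * (∑ k : Fin 3, ∑ i : Fin 3, ∑ j : Fin 3, |g k i j|) + 1, by positivity, ?_⟩
  intro f h hf hh y hy
  have ht0 : 0 < y 0 := hy.1
  have hr : 0 < rad y := rad_pos hy
  have hsq : rad y ^ 2 = y 1 ^ 2 + y 2 ^ 2 := Real.sq_sqrt (by positivity)
  -- Null condition at the point y
  have habsz : ‖(⟨y 1, y 2⟩ : ℂ)‖ = rad y := by
    rw [Complex.norm_def, Complex.normSq_mk, rad]
    congr 1; ring
  have hzne : (⟨y 1, y 2⟩ : ℂ) ≠ 0 := by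
    intro hzz
    rw [hzz] at habsz
    simp only [norm_zero] at habsz
    exact hr.ne (habsz)
  obtain ⟨θ, hc1, hc2⟩ : ∃ θ : ℝ, Real.cos θ = y 1 / rad y ∧ Real.sin θ = y 2 / rad y := by
    refine ⟨Complex.arg ⟨y 1, y 2⟩, ?_, ?_⟩
    · rw [Complex.cos_arg hzne, habsz]
    · rw [Complex.sin_arg, habsz]
  have homθ : ∀ k : Fin 3, om k y = nullVec θ k := by
    intro k
    fin_cases k
    · rfl
    · show y 1 / rad y = nullVec θ 1
      rw [show nullVec θ 1 = Real.cos θ from rfl, hc1]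
    · show y 2 / rad y = nullVec θ 2
      rw [show nullVec θ 2 = Real.sin θ from rfl, hc2]
  have hzero : (∑ k : Fin 3, ∑ i : Fin 3, ∑ j : Fin 3,
      g k i j * om k y * om i y * om j y) = 0 := by
    simp only [homθ]
    exact hnull θ
  -- The pointwise decomposition
  have hswap : ∀ j : Fin 3, pd j (pd 0 h) y = pd 0 (pd j h) y :=
    fun j => pd_swap h hh y hy j 0
  have key : ∀ k i j : Fin 3, g k i j * pd k f y * pd i (pd j h) y
      = g k i j * (Td k f y * pd i (pd j h) y
          - om k y * pd 0 f y * Td i (pd j h) y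
          + om k y * om i y * pd 0 f y * Td j (pd 0 h) y)
        - g k i j * om k y * om i y * om j y * (pd 0 f y * pd 0 (pd 0 h) y) := by
    intro k i j
    have e1 : Td k f y = om k y * pd 0 f y + pd k f y := rfl
    have e2 : Td i (pd j h) y = om i y * pd 0 (pd j h) y + pd i (pd j h) y := rfl
    have e3 : Td j (pd 0 h) y = om j y * pd 0 (pd 0 h) y + pd 0 (pd j h) y := by
      rw [show Td j (pd 0 h) y = om j y * pd 0 (pd 0 h) y + pd j (pd 0 h) y from rfl, hswap j]
    rw [e1, e2, e3]; ring
  have hsumEq : (∑ k : Fin 3, ∑ i : Fin 3, ∑ j : Fin 3, g k i j * pd k f y * pd i (pd j h) y)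
      = ∑ k : Fin 3, ∑ i : Fin 3, ∑ j : Fin 3, g k i j * (Td k f y * pd i (pd j h) y
          - om k y * pd 0 f y * Td i (pd j h) y
          + om k y * om i y * pd 0 f y * Td j (pd 0 h) y) := by
    have h1 : (∑ k : Fin 3, ∑ i : Fin 3, ∑ j : Fin 3, g k i j * pd k f y * pd i (pd j h) y)
        = (∑ k : Fin 3, ∑ i : Fin 3, ∑ j : Fin 3, g k i j * (Td k f y * pd i (pd j h) y
            - om k y * pd 0 f y * Td i (pd j h) y
            + om k y * om i y * pd 0 f y * Td j (pd 0 h) y))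
          - ∑ k : Fin 3, ∑ i : Fin 3, ∑ j : Fin 3,
              g k i j * om k y * om i y * om j y * (pd 0 f y * pd 0 (pd 0 h) y) := by
      rw [← Finset.sum_sub_distrib]
      refine Finset.sum_congr rfl fun k _ => ?_
      rw [← Finset.sum_sub_distrib]
      refine Finset.sum_congr rfl fun i _ => ?_
      rw [← Finset.sum_sub_distrib]
      exact Finset.sum_congr rfl fun j _ => key k i j
    have h2 : (∑ k : Fin 3, ∑ i : Fin 3, ∑ j : Fin 3,
        g k i j * om k y * om i y * om j y * (pd 0 f y * pd 0 (pd 0 h) y)) = 0 := by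
      simp only [← Finset.sum_mul]
      rw [hzero, zero_mul]
    rw [h1, h2, sub_zero]
  -- Notation
  set Af := Real.sqrt (∑ a : Fin 5, (Gam a f y) ^ 2) with hAfd
  set Bf := Real.sqrt (∑ a : Fin 3, (pd a f y) ^ 2) with hBfd
  set H2 := Real.sqrt (∑ a : Fin 3, ∑ b : Fin 3, (pd a (pd b h) y) ^ 2) with hH2d
  set Gh := Real.sqrt (∑ a : Fin 5, ∑ b : Fin 3, (Gam a (pd b h) y) ^ 2) with hGhd
  set D := |rad y - y 0| with hDd
  set Jv := (jb (rad y + y 0))⁻¹ with hJvd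
  have hJv0 : 0 ≤ Jv := le_of_lt (inv_pos.2 (jb_pos _))
  have hAf0 : 0 ≤ Af := Real.sqrt_nonneg _
  have hBf0 : 0 ≤ Bf := Real.sqrt_nonneg _
  have hH20 : 0 ≤ H2 := Real.sqrt_nonneg _
  have hGh0 : 0 ≤ Gh := Real.sqrt_nonneg _
  have hD0 : 0 ≤ D := abs_nonneg _
  -- Bounds on the good derivatives
  have hTf : ∀ k : Fin 3, |Td k f y| ≤ Jv * (6 * Af + 4 * D * Bf) := fun k => td_bound f y hy k
  have hTh : ∀ i j : Fin 3, |Td i (pd j h) y| ≤ Jv * (6 * Gh + 4 * D * H2) := by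
    intro i j
    refine (td_bound (pd j h) y hy i).trans ?_
    have h1 : Real.sqrt (∑ a : Fin 5, (Gam a (pd j h) y) ^ 2) ≤ Gh := by
      rw [hGhd]
      apply Real.sqrt_le_sqrt
      exact Finset.sum_le_sum fun a _ =>
        Finset.single_le_sum (f := fun b => (Gam a (pd b h) y) ^ 2)
          (fun b _ => sq_nonneg _) (Finset.mem_univ j)
    have h2 : Real.sqrt (∑ a : Fin 3, (pd a (pd j h) y) ^ 2) ≤ H2 := by
      rw [hH2d]
      apply Real.sqrt_le_sqrt
      exact Finset.sum_le_sum fun a _ =>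
        Finset.single_le_sum (f := fun b => (pd a (pd b h) y) ^ 2)
          (fun b _ => sq_nonneg _) (Finset.mem_univ j)
    exact bnd_mono hJv0 hD0 h1 h2 (Real.sqrt_nonneg _)
  have hF0 : |pd 0 f y| ≤ Bf := comp_le_sqrt (fun a : Fin 3 => pd a f y) 0
  -- Per-term bound
  have hterm : ∀ k i j : Fin 3,
      |g k i j * (Td k f y * pd i (pd j h) y
          - om k y * pd 0 f y * Td i (pd j h) y
          + om k y * om i y * pd 0 f y * Td j (pd 0 h) y)|
      ≤ |g k i j| * (Jv * (12 * (Af * H2 + Bf * Gh + Bf * H2 * D))) := by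
    intro k i j
    rw [abs_mul]
    apply mul_le_mul_of_nonneg_left _ (abs_nonneg _)
    have hHij : |pd i (pd j h) y| ≤ H2 := comp2_le_sqrt (fun a b => pd a (pd b h) y) i j
    have homk : |om k y| ≤ 1 := om_le hy k
    have homi : |om i y| ≤ 1 := om_le hy i
    have t1 : |Td k f y * pd i (pd j h) y| ≤ (Jv * (6 * Af + 4 * D * Bf)) * H2 := by
      rw [abs_mul]
      exact mul_le_mul (hTf k) hHij (abs_nonneg _) ((abs_nonneg (Td k f y)).trans (hTf k))
    have t2 : |om k y * pd 0 f y * Td i (pd j h) y| ≤ Bf * (Jv * (6 * Gh + 4 * D * H2)) := by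
      rw [abs_mul, abs_mul]
      have hh1 : |om k y| * |pd 0 f y| ≤ 1 * Bf :=
        mul_le_mul homk hF0 (abs_nonneg _) zero_le_one
      calc |om k y| * |pd 0 f y| * |Td i (pd j h) y|
          ≤ (1 * Bf) * (Jv * (6 * Gh + 4 * D * H2)) :=
            mul_le_mul hh1 (hTh i j) (abs_nonneg _) (by linarith)
        _ = Bf * (Jv * (6 * Gh + 4 * D * H2)) := by ring
    have t3 : |om k y * om i y * pd 0 f y * Td j (pd 0 h) y|
        ≤ Bf * (Jv * (6 * Gh + 4 * D * H2)) := by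
      rw [abs_mul, abs_mul, abs_mul]
      have hh1 : |om k y| * |om i y| * |pd 0 f y| ≤ 1 * 1 * Bf := by
        have := mul_le_mul homk homi (abs_nonneg _) zero_le_one
        exact mul_le_mul this hF0 (abs_nonneg _) (by norm_num)
      calc |om k y| * |om i y| * |pd 0 f y| * |Td j (pd 0 h) y|
          ≤ (1 * 1 * Bf) * (Jv * (6 * Gh + 4 * D * H2)) :=
            mul_le_mul hh1 (hTh j 0) (abs_nonneg _) (by linarith)
        _ = Bf * (Jv * (6 * Gh + 4 * D * H2)) := by ring
    have tri : |Td k f y * pd i (pd j h) y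
          - om k y * pd 0 f y * Td i (pd j h) y
          + om k y * om i y * pd 0 f y * Td j (pd 0 h) y|
        ≤ |Td k f y * pd i (pd j h) y| + |om k y * pd 0 f y * Td i (pd j h) y|
          + |om k y * om i y * pd 0 f y * Td j (pd 0 h) y| := by
      refine (abs_add_le _ _).trans (add_le_add_left ?_ _)
      exact abs_sub _ _
    refine tri.trans ?_
    have hfin : (Jv * (6 * Af + 4 * D * Bf)) * H2 + Bf * (Jv * (6 * Gh + 4 * D * H2))
        + Bf * (Jv * (6 * Gh + 4 * D * H2))
        ≤ Jv * (12 * (Af * H2 + Bf * Gh + Bf * H2 * D)) := by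
      nlinarith [mul_nonneg hJv0 (mul_nonneg hAf0 hH20)]
    linarith [t1, t2, t3]
  -- Put everything together
  rw [hsumEq]
  have habs3 : |∑ k : Fin 3, ∑ i : Fin 3, ∑ j : Fin 3, g k i j * (Td k f y * pd i (pd j h) y
          - om k y * pd 0 f y * Td i (pd j h) y
          + om k y * om i y * pd 0 f y * Td j (pd 0 h) y)|
      ≤ ∑ k : Fin 3, ∑ i : Fin 3, ∑ j : Fin 3, |g k i j * (Td k f y * pd i (pd j h) y
          - om k y * pd 0 f y * Td i (pd j h) y
          + om k y * om i y * pd 0 f y * Td j (pd 0 h) y)| := by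
    refine (Finset.abs_sum_le_sum_abs _ _).trans (Finset.sum_le_sum fun k _ => ?_)
    refine (Finset.abs_sum_le_sum_abs _ _).trans (Finset.sum_le_sum fun i _ => ?_)
    exact Finset.abs_sum_le_sum_abs _ _
  refine habs3.trans ?_
  have hsb : (∑ k : Fin 3, ∑ i : Fin 3, ∑ j : Fin 3, |g k i j * (Td k f y * pd i (pd j h) y
          - om k y * pd 0 f y * Td i (pd j h) y
          + om k y * om i y * pd 0 f y * Td j (pd 0 h) y)|)
      ≤ ∑ k : Fin 3, ∑ i : Fin 3, ∑ j : Fin 3,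
          |g k i j| * (Jv * (12 * (Af * H2 + Bf * Gh + Bf * H2 * D))) :=
    Finset.sum_le_sum fun k _ => Finset.sum_le_sum fun i _ =>
      Finset.sum_le_sum fun j _ => hterm k i j
  refine hsb.trans ?_
  have hcollect : (∑ k : Fin 3, ∑ i : Fin 3, ∑ j : Fin 3,
        |g k i j| * (Jv * (12 * (Af * H2 + Bf * Gh + Bf * H2 * D))))
      = (∑ k : Fin 3, ∑ i : Fin 3, ∑ j : Fin 3, |g k i j|)
          * (Jv * (12 * (Af * H2 + Bf * Gh + Bf * H2 * D))) := by
    simp only [← Finset.sum_mul]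
  rw [hcollect]
  have hM : 0 ≤ ∑ k : Fin 3, ∑ i : Fin 3, ∑ j : Fin 3, |g k i j| := by positivity
  have hE1 : 0 ≤ Jv * (Af * H2) := mul_nonneg hJv0 (mul_nonneg hAf0 hH20)
  have hE2 : 0 ≤ Jv * (Bf * Gh) := mul_nonneg hJv0 (mul_nonneg hBf0 hGh0)
  have hE3 : 0 ≤ Jv * (Bf * H2 * D) :=
    mul_nonneg hJv0 (mul_nonneg (mul_nonneg hBf0 hH20) hD0)
  nlinarith [hE1, hE2, hE3, mul_nonneg hM hE1, mul_nonneg hM hE2, mul_nonneg hM hE3]
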